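/- arXiv:1106.5961 — 2 statements merged into one kernel-verified Lean document; each statement's English description precedes it below -/
import Mathlib

section
/- Let g : ℝ → ℝ be continuous and periodic with period L > 0 with mean m(g), and let f : [0,T] → ℝ be continuous. Then ∫₀^T g(ω(t + t₀)) f(t) dt → m(g) ∫₀^T f(t) dt as |ω| → ∞, uniformly in t₀ ∈ ℝ. -/
open MeasureTheory intervalIntegral

lemma aux_periodic_bound {p : ℝ → ℝ} (hc : Continuous p) {L : ℝ} (hL : 0 < L)
    (hp : Function.Periodic p L) : ∃ C : ℝ, 0 ≤ C ∧ ∀ x, |p x| ≤ C := by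
  obtain ⟨C, hC⟩ :=
    (isCompact_Icc (a := (0:ℝ)) (b := L)).exists_bound_of_continuousOn hc.continuousOn
  refine ⟨max C 0, le_max_right _ _, fun x => ?_⟩
  obtain ⟨y, hy, hxy⟩ := hp.exists_mem_Ico₀ hL x
  rw [hxy]
  exact le_trans (by simpa using hC y (Set.Ico_subset_Icc_self hy)) (le_max_left _ _)

theorem stmt_4 (g : ℝ → ℝ) (hg : Continuous g) (L : ℝ) (hL : 0 < L)
    (hper : ∀ t, g (t + L) = g t) (T : ℝ) (hT : 0 < T) (f : ℝ → ℝ)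
    (hf : ContinuousOn f (Set.Icc 0 T)) :
    ∀ ε > 0, ∃ M : ℝ, ∀ ω : ℝ, M ≤ |ω| → ∀ t₀ : ℝ,
      |(∫ t in (0:ℝ)..T, g (ω * (t + t₀)) * f t) -
        ((1 / L) * ∫ s in (0:ℝ)..L, g s) * ∫ t in (0:ℝ)..T, f t| < ε := by
  intro ε hε
  set m : ℝ := (1 / L) * ∫ s in (0:ℝ)..L, g s with hm
  set h : ℝ → ℝ := fun x => g x - m with hhdef
  have hh_cont : Continuous h := hg.sub continuous_const
  have hh_per : Function.Periodic h L := fun t => by simp only [hhdef, hper t]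
  have hh_int : ∀ a b : ℝ, IntervalIntegrable h volume a b :=
    fun a b => hh_cont.intervalIntegrable a b
  have hh_mean : (∫ s in (0:ℝ)..L, h s) = 0 := by
    have h1 : (∫ s in (0:ℝ)..L, h s) = (∫ s in (0:ℝ)..L, g s) - L * m := by
      simp only [hhdef]
      rw [intervalIntegral.integral_sub (hg.intervalIntegrable _ _) intervalIntegrable_const,
        intervalIntegral.integral_const, smul_eq_mul, sub_zero]
    have h2 : L * m = ∫ s in (0:ℝ)..L, g s := by
      rw [hm, one_div, ← mul_assoc, mul_inv_cancel₀ (ne_of_gt hL), one_mul]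
    rw [h1, h2]; ring
  set G : ℝ → ℝ := fun x => ∫ s in (0:ℝ)..x, h s with hGdef
  have hG_cont : Continuous G := intervalIntegral.continuous_primitive hh_int 0
  have hG_per : Function.Periodic G L := by
    intro x
    have h1 : (∫ s in x..x + L, h s) = 0 := by
      rw [hh_per.intervalIntegral_add_eq x 0]
      simpa using hh_mean
    have h2 := intervalIntegral.integral_add_adjacent_intervals (hh_int 0 x) (hh_int x (x + L))
    simp only [hGdef]
    rw [← h2, h1, add_zero]
  have hGsub : ∀ c d : ℝ, (∫ s in c..d, h s) = G d - G c := by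
    intro c d
    have h2 := intervalIntegral.integral_add_adjacent_intervals (hh_int 0 c) (hh_int c d)
    simp only [hGdef]
    linarith [h2]
  obtain ⟨CG, hCG0, hCG⟩ := aux_periodic_bound hG_cont hL hG_per
  obtain ⟨Ch, hCh0, hCh⟩ := aux_periodic_bound hh_cont hL hh_per
  obtain ⟨Cf, hCf0, hCf⟩ : ∃ C : ℝ, 0 ≤ C ∧ ∀ x ∈ Set.Icc (0:ℝ) T, |f x| ≤ C := by
    obtain ⟨C, hC⟩ := isCompact_Icc.exists_bound_of_continuousOn hf
    exact ⟨max C 0, le_max_right _ _, fun x hx =>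
      le_trans (by simpa using hC x hx) (le_max_left _ _)⟩
  have huc : UniformContinuousOn f (Set.Icc 0 T) :=
    isCompact_Icc.uniformContinuousOn_of_continuous hf
  set ε' : ℝ := ε / (2 * (Ch * T + 1)) with hε'
  have hε'pos : 0 < ε' := by positivity
  obtain ⟨δ, hδpos, hδ⟩ := Metric.uniformContinuousOn_iff.mp huc ε' hε'pos
  set n : ℕ := ⌈T / δ⌉₊ + 1 with hn
  have hn0 : 0 < (n : ℝ) := by positivity
  have hTn : T / n < δ := by
    rw [div_lt_iff₀ hn0]
    have h1 : T / δ < (n : ℝ) := by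
      calc T / δ ≤ (⌈T / δ⌉₊ : ℝ) := Nat.le_ceil _
      _ < n := by exact_mod_cast Nat.lt_succ_self _
    calc T = (T / δ) * δ := by field_simp
    _ < n * δ := by exact mul_lt_mul_of_pos_right h1 hδpos
    _ = δ * n := mul_comm _ _
  have hTn0 : 0 < T / n := by positivity
  set a : ℕ → ℝ := fun i => i * (T / n) with hadef
  have ha0 : a 0 = 0 := by simp [hadef]
  have han : a n = T := by
    simp only [hadef]
    field_simp
  have hamem : ∀ i ≤ n, a i ∈ Set.Icc (0:ℝ) T := by
    intro i hi
    constructor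
    · positivity
    · calc (i : ℝ) * (T / n) ≤ n * (T / n) := by
            apply mul_le_mul_of_nonneg_right _ hTn0.le
            exact_mod_cast hi
      _ = T := by field_simp
  have hastep : ∀ i : ℕ, a (i + 1) - a i = T / n := by
    intro i
    simp only [hadef]
    push_cast
    ring
  refine ⟨(4 * n * Cf * CG + 1) / ε, fun ω hω t₀ => ?_⟩
  have hMpos : 0 < (4 * n * Cf * CG + 1) / ε := by positivity
  have hωpos : 0 < |ω| := lt_of_lt_of_le hMpos hω
  have hωne : ω ≠ 0 := by
    intro h0
    rw [h0, abs_zero] at hωpos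
    exact lt_irrefl _ hωpos
  -- oscillatory integral bound
  have hosc : ∀ c d : ℝ, |∫ t in c..d, h (ω * (t + t₀))| ≤ 2 * CG / |ω| := by
    intro c d
    have heq : (fun t => h (ω * (t + t₀))) = fun t => h (ω * t + ω * t₀) := by
      funext t; ring_nf
    rw [heq, intervalIntegral.integral_comp_mul_add h hωne (ω * t₀), smul_eq_mul, hGsub,
      abs_mul, abs_inv]
    rw [div_eq_inv_mul]
    apply mul_le_mul_of_nonneg_left _ (by positivity)
    calc |G (ω * d + ω * t₀) - G (ω * c + ω * t₀)| ≤
        |G (ω * d + ω * t₀)| + |G (ω * c + ω * t₀)| := by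
          rw [sub_eq_add_neg]
          exact (abs_add_le _ _).trans (by rw [abs_neg])
    _ ≤ CG + CG := add_le_add (hCG _) (hCG _)
    _ = 2 * CG := by ring
  set F : ℝ → ℝ := fun t => h (ω * (t + t₀)) * f t with hFdef
  have hcont1 : Continuous fun t => h (ω * (t + t₀)) :=
    hh_cont.comp (continuous_const.mul (continuous_id.add continuous_const))
  have hFcont : ContinuousOn F (Set.Icc 0 T) := hcont1.continuousOn.mul hf
  have hintF : ∀ c d, c ∈ Set.Icc (0:ℝ) T → d ∈ Set.Icc (0:ℝ) T →
      IntervalIntegrable F volume c d := by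
    intro c d hc hd
    apply ContinuousOn.intervalIntegrable
    exact hFcont.mono (Set.uIcc_subset_Icc hc hd)
  have hintsub : ∀ i < n, IntervalIntegrable F volume (a i) (a (i + 1)) :=
    fun i hi => hintF _ _ (hamem i hi.le) (hamem (i + 1) hi)
  have hsplit : (∫ t in (0:ℝ)..T, F t) = ∑ i ∈ Finset.range n, ∫ t in a i..a (i + 1), F t := by
    rw [intervalIntegral.sum_integral_adjacent_intervals hintsub, ha0, han]
  -- per-interval bound
  have hkey : ∀ i ∈ Finset.range n,
      |∫ t in a i..a (i + 1), F t| ≤ Ch * ε' * (T / n) + Cf * (2 * CG / |ω|) := by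
    intro i hi
    rw [Finset.mem_range] at hi
    have hai := hamem i hi.le
    have hai1 := hamem (i + 1) hi
    have haiLt : a i < a (i + 1) := by
      have := hastep i; linarith
    have hFsplit : ∀ t : ℝ, F t =
        h (ω * (t + t₀)) * (f t - f (a i)) + h (ω * (t + t₀)) * f (a i) := by
      intro t; simp only [hFdef]; ring
    have hint1 : IntervalIntegrable (fun t => h (ω * (t + t₀)) * (f t - f (a i)))
        volume (a i) (a (i + 1)) := by
      apply ContinuousOn.intervalIntegrable
      apply ContinuousOn.mul hcont1.continuousOn
      apply ContinuousOn.sub _ continuousOn_const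
      exact hf.mono (Set.uIcc_subset_Icc hai hai1)
    have hint2 : IntervalIntegrable (fun t => h (ω * (t + t₀)) * f (a i))
        volume (a i) (a (i + 1)) :=
      (hcont1.mul continuous_const).intervalIntegrable _ _
    have heq : (∫ t in a i..a (i + 1), F t) =
        (∫ t in a i..a (i + 1), h (ω * (t + t₀)) * (f t - f (a i))) +
        (∫ t in a i..a (i + 1), h (ω * (t + t₀))) * f (a i) := by
      rw [← intervalIntegral.integral_mul_const, ← intervalIntegral.integral_add hint1 hint2]
      simp only [hFsplit]
    rw [heq]
    have hb1 : |∫ t in a i..a (i + 1), h (ω * (t + t₀)) * (f t - f (a i))| ≤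
        Ch * ε' * (T / n) := by
      have := intervalIntegral.norm_integral_le_of_norm_le_const
        (a := a i) (b := a (i + 1)) (C := Ch * ε')
        (f := fun t => h (ω * (t + t₀)) * (f t - f (a i))) ?_
      · rw [Real.norm_eq_abs] at this
        calc |∫ t in a i..a (i + 1), h (ω * (t + t₀)) * (f t - f (a i))| ≤
            Ch * ε' * |a (i + 1) - a i| := this
        _ = Ch * ε' * (T / n) := by rw [hastep i, abs_of_pos hTn0]
      · intro t ht
        rw [Set.uIoc_of_le haiLt.le] at ht
        have htmem : t ∈ Set.Icc (0:ℝ) T :=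
          ⟨le_trans hai.1 ht.1.le, le_trans ht.2 hai1.2⟩
        have hdist : dist t (a i) < δ := by
          rw [Real.dist_eq, abs_of_pos (by linarith [ht.1] : (0:ℝ) < t - a i)]
          have : t - a i ≤ T / n := by
            have := hastep i; linarith [ht.2]
          linarith
        have hfd : |f t - f (a i)| < ε' := by
          have := hδ t htmem (a i) hai hdist
          rwa [Real.dist_eq] at this
        rw [Real.norm_eq_abs, abs_mul]
        exact mul_le_mul (hCh _) hfd.le (abs_nonneg _) hCh0
    have hb2 : |(∫ t in a i..a (i + 1), h (ω * (t + t₀))) * f (a i)| ≤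
        Cf * (2 * CG / |ω|) := by
      rw [abs_mul, mul_comm]
      exact mul_le_mul (hCf _ hai) (hosc _ _) (abs_nonneg _) hCf0
    calc |(∫ t in a i..a (i + 1), h (ω * (t + t₀)) * (f t - f (a i))) +
        (∫ t in a i..a (i + 1), h (ω * (t + t₀))) * f (a i)| ≤ _ + _ := abs_add_le _ _
    _ ≤ Ch * ε' * (T / n) + Cf * (2 * CG / |ω|) := add_le_add hb1 hb2
  have hFbound : |∫ t in (0:ℝ)..T, F t| ≤ Ch * ε' * T + n * (Cf * (2 * CG / |ω|)) := by
    rw [hsplit]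
    calc |∑ i ∈ Finset.range n, ∫ t in a i..a (i + 1), F t| ≤
        ∑ i ∈ Finset.range n, |∫ t in a i..a (i + 1), F t| := Finset.abs_sum_le_sum_abs _ _
    _ ≤ ∑ i ∈ Finset.range n, (Ch * ε' * (T / n) + Cf * (2 * CG / |ω|)) :=
        Finset.sum_le_sum hkey
    _ = n * (Ch * ε' * (T / n) + Cf * (2 * CG / |ω|)) := by
        rw [Finset.sum_const, Finset.card_range, nsmul_eq_mul]
    _ = Ch * ε' * T + n * (Cf * (2 * CG / |ω|)) := by
        field_simp
  -- reduce goal to F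
  have hgoal_eq : (∫ t in (0:ℝ)..T, g (ω * (t + t₀)) * f t) - m * (∫ t in (0:ℝ)..T, f t) =
      ∫ t in (0:ℝ)..T, F t := by
    have hintg : IntervalIntegrable (fun t => g (ω * (t + t₀)) * f t) volume 0 T := by
      apply ContinuousOn.intervalIntegrable
      apply ContinuousOn.mul
      · exact (hg.comp (continuous_const.mul (continuous_id.add continuous_const))).continuousOn
      · exact hf.mono (by rw [Set.uIcc_of_le hT.le])
    have hintmf : IntervalIntegrable (fun t => m * f t) volume 0 T := by
      apply ContinuousOn.intervalIntegrable
      apply ContinuousOn.mul continuousOn_const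
      exact hf.mono (by rw [Set.uIcc_of_le hT.le])
    have hFeq : ∀ t : ℝ, F t = g (ω * (t + t₀)) * f t - m * f t := by
      intro t; simp only [hFdef, hhdef]; ring
    rw [show (∫ t in (0:ℝ)..T, F t) = ∫ t in (0:ℝ)..T,
        (g (ω * (t + t₀)) * f t - m * f t) from by simp only [hFeq]]
    rw [intervalIntegral.integral_sub hintg hintmf, intervalIntegral.integral_const_mul]
  rw [hgoal_eq]
  -- final numeric estimate
  have hfirst : Ch * ε' * T ≤ ε / 2 := by
    have hid : ε' * (2 * (Ch * T + 1)) = ε := by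
      rw [hε']; field_simp
    nlinarith [hε'pos.le, mul_nonneg hCh0 hT.le]
  have hsecond : (n : ℝ) * (Cf * (2 * CG / |ω|)) < ε / 2 := by
    have hA : 0 ≤ (n : ℝ) * Cf * CG := by positivity
    have h1 : (4 * n * Cf * CG + 1) / ε ≤ |ω| := hω
    have h2 : (4 * n * Cf * CG + 1) ≤ |ω| * ε := by
      rw [div_le_iff₀ hε] at h1
      linarith
    have h3 : (n : ℝ) * (Cf * (2 * CG / |ω|)) = 2 * (n * Cf * CG) / |ω| := by
      field_simp
    rw [h3, div_lt_iff₀ hωpos]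
    nlinarith [mul_pos hωpos hε]
  calc |∫ t in (0:ℝ)..T, F t| ≤ Ch * ε' * T + n * (Cf * (2 * CG / |ω|)) := hFbound
  _ < ε / 2 + ε / 2 := by
      apply add_lt_add_of_le_of_lt hfirst hsecond
  _ = ε := by ring
end

section
/- If u : ℝ × [0,T] → ℝ is smooth, rapidly decaying in x together with its derivatives, and solves u_t + u_{xxx} + ∂_x(u^{k+1}) = 0, then the energy E(t) = (1/2)∫_ℝ u_x(x,t)² dx - (1/(k+2))∫_ℝ u(x,t)^{k+2} dx is constant in time. -/
open MeasureTheory Filter Set Topology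

noncomputable section KdVAux

namespace KdVAux

/-- partial derivative in the first variable -/
def pdx (f : ℝ × ℝ → ℝ) : ℝ × ℝ → ℝ := fun z => fderiv ℝ f z (1, 0)
/-- partial derivative in the second variable -/
def pdt (f : ℝ × ℝ → ℝ) : ℝ × ℝ → ℝ := fun z => fderiv ℝ f z (0, 1)

lemma contDiff_pdx {f : ℝ × ℝ → ℝ} (hf : ContDiff ℝ (⊤ : ℕ∞) f) : ContDiff ℝ (⊤ : ℕ∞) (pdx f) :=
  (hf.fderiv_right (by simp)).clm_apply contDiff_const

lemma contDiff_pdt {f : ℝ × ℝ → ℝ} (hf : ContDiff ℝ (⊤ : ℕ∞) f) : ContDiff ℝ (⊤ : ℕ∞) (pdt f) :=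
  (hf.fderiv_right (by simp)).clm_apply contDiff_const

lemma hasDerivAt_slice_x {f : ℝ × ℝ → ℝ} (hf : ContDiff ℝ (⊤ : ℕ∞) f) (x t : ℝ) :
    HasDerivAt (fun y => f (y, t)) (pdx f (x, t)) x := by
  have h1 : HasDerivAt (fun y : ℝ => (y, t)) ((1 : ℝ), (0 : ℝ)) x := by
    simpa using (hasDerivAt_id x).prodMk (hasDerivAt_const x t)
  exact ((hf.differentiable (by simp) (x, t)).hasFDerivAt.comp_hasDerivAt x h1)

lemma hasDerivAt_slice_t {f : ℝ × ℝ → ℝ} (hf : ContDiff ℝ (⊤ : ℕ∞) f) (x t : ℝ) :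
    HasDerivAt (fun τ => f (x, τ)) (pdt f (x, t)) t := by
  have h1 : HasDerivAt (fun τ : ℝ => (x, τ)) ((0 : ℝ), (1 : ℝ)) t := by
    simpa using (hasDerivAt_const t x).prodMk (hasDerivAt_id t)
  exact ((hf.differentiable (by simp) (x, t)).hasFDerivAt.comp_hasDerivAt t h1)

lemma pdx_eq {f : ℝ × ℝ → ℝ} (hf : ContDiff ℝ (⊤ : ℕ∞) f) {x t d : ℝ}
    (h : HasDerivAt (fun y => f (y, t)) d x) : pdx f (x, t) = d :=
  (hasDerivAt_slice_x hf x t).unique h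

lemma pdt_eq {f : ℝ × ℝ → ℝ} (hf : ContDiff ℝ (⊤ : ℕ∞) f) {x t d : ℝ}
    (h : HasDerivAt (fun τ => f (x, τ)) d t) : pdt f (x, t) = d :=
  (hasDerivAt_slice_t hf x t).unique h

/-- Clairaut / symmetry of mixed partials for smooth functions. -/
lemma pdx_pdt {f : ℝ × ℝ → ℝ} (hf : ContDiff ℝ (⊤ : ℕ∞) f) : pdx (pdt f) = pdt (pdx f) := by
  funext z
  have hdf : ∀ y, HasFDerivAt f (fderiv ℝ f y) y := fun y =>
    (hf.differentiable (by simp) y).hasFDerivAt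
  have hdf' : HasFDerivAt (fderiv ℝ f) (fderiv ℝ (fderiv ℝ f) z) z :=
    (((hf.fderiv_right (m := (⊤ : ℕ∞)) (by simp)).differentiable (by simp)) z).hasFDerivAt
  have hsymm := second_derivative_symmetric hdf hdf' ((1:ℝ), (0:ℝ)) ((0:ℝ), (1:ℝ))
  have hx : ∀ v w : ℝ × ℝ, fderiv ℝ (fun z => fderiv ℝ f z v) z w
      = fderiv ℝ (fderiv ℝ f) z w v := by
    intro v w
    have : HasFDerivAt (fun z => fderiv ℝ f z v)
        ((ContinuousLinearMap.apply ℝ ℝ v).comp (fderiv ℝ (fderiv ℝ f) z)) z :=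
      (ContinuousLinearMap.apply ℝ ℝ v).hasFDerivAt.comp z hdf'
    rw [this.fderiv]; rfl
  show fderiv ℝ (fun z => fderiv ℝ f z (0, 1)) z (1, 0)
      = fderiv ℝ (fun z => fderiv ℝ f z (1, 0)) z (0, 1)
  rw [hx (0,1) (1,0), hx (1,0) (0,1)]
  exact hsymm

lemma contDiff_pdx_iter {f : ℝ × ℝ → ℝ} (hf : ContDiff ℝ (⊤ : ℕ∞) f) (m : ℕ) :
    ContDiff ℝ (⊤ : ℕ∞) (pdx^[m] f) := by
  induction m with
  | zero => exact hf
  | succ n ih => rw [Function.iterate_succ_apply']; exact contDiff_pdx ih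

lemma iteratedDeriv_slice {f : ℝ × ℝ → ℝ} (hf : ContDiff ℝ (⊤ : ℕ∞) f) (m : ℕ) (x t : ℝ) :
    iteratedDeriv m (fun y => f (y, t)) x = pdx^[m] f (x, t) := by
  induction m generalizing f with
  | zero => simp
  | succ n ih =>
      rw [iteratedDeriv_succ']
      have : (deriv fun y => f (y, t)) = fun y => pdx f (y, t) := by
        funext y; exact (hasDerivAt_slice_x hf y t).deriv
      rw [this, ih (contDiff_pdx hf), ← Function.iterate_succ_apply]

end KdVAux

namespace KdVAux
open MeasureTheory Filter Set Topology

/-- families bounded by `C (1+x²)⁻¹` uniformly over `t ∈ s` -/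
def Dec (s : Set ℝ) (f : ℝ × ℝ → ℝ) : Prop :=
  ∃ C : ℝ, ∀ t ∈ s, ∀ x : ℝ, |f (x, t)| ≤ C * (1 + x ^ 2)⁻¹

def Bdd (s : Set ℝ) (f : ℝ × ℝ → ℝ) : Prop :=
  ∃ C : ℝ, ∀ t ∈ s, ∀ x : ℝ, |f (x, t)| ≤ C

variable {s : Set ℝ} {f g : ℝ × ℝ → ℝ}

lemma aux_pos (x : ℝ) : (0:ℝ) < 1 + x ^ 2 := by positivity

lemma aux_inv_le_one (x : ℝ) : (1 + x ^ 2)⁻¹ ≤ (1:ℝ) := by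
  rw [inv_le_one_iff₀]; right; nlinarith [sq_nonneg x]

lemma aux_inv_nonneg (x : ℝ) : (0:ℝ) ≤ (1 + x ^ 2)⁻¹ := by positivity

lemma Dec.bdd (h : Dec s f) : Bdd s f := by
  obtain ⟨C, hC⟩ := h
  refine ⟨max C 0, fun t ht x => (hC t ht x).trans ?_⟩
  calc C * (1 + x ^ 2)⁻¹ ≤ max C 0 * (1 + x ^ 2)⁻¹ := by
        exact mul_le_mul_of_nonneg_right (le_max_left _ _) (aux_inv_nonneg x)
    _ ≤ max C 0 * 1 := by
        exact mul_le_mul_of_nonneg_left (aux_inv_le_one x) (le_max_right _ _)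
    _ = max C 0 := mul_one _

lemma Dec.add (hf : Dec s f) (hg : Dec s g) : Dec s (fun z => f z + g z) := by
  obtain ⟨C, hC⟩ := hf; obtain ⟨D, hD⟩ := hg
  refine ⟨C + D, fun t ht x => ?_⟩
  calc |f (x,t) + g (x,t)| ≤ |f (x,t)| + |g (x,t)| := abs_add_le _ _
    _ ≤ C * (1 + x ^ 2)⁻¹ + D * (1 + x ^ 2)⁻¹ := add_le_add (hC t ht x) (hD t ht x)
    _ = (C + D) * (1 + x ^ 2)⁻¹ := by ring

lemma Dec.neg (hf : Dec s f) : Dec s (fun z => -f z) := by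
  obtain ⟨C, hC⟩ := hf
  exact ⟨C, fun t ht x => by simpa using hC t ht x⟩

lemma Dec.sub (hf : Dec s f) (hg : Dec s g) : Dec s (fun z => f z - g z) := by
  simpa [sub_eq_add_neg] using hf.add hg.neg

lemma Bdd.mul_dec (hf : Bdd s f) (hg : Dec s g) : Dec s (fun z => f z * g z) := by
  obtain ⟨C, hC⟩ := hf; obtain ⟨D, hD⟩ := hg
  refine ⟨max C 0 * D, fun t ht x => ?_⟩
  rw [abs_mul, mul_assoc]
  have h1 : |f (x,t)| ≤ max C 0 := (hC t ht x).trans (le_max_left _ _)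
  have h2 : |g (x,t)| ≤ D * (1 + x ^ 2)⁻¹ := hD t ht x
  exact mul_le_mul h1 h2 (abs_nonneg _) (le_max_right _ _)

lemma Dec.mul_bdd (hf : Dec s f) (hg : Bdd s g) : Dec s (fun z => f z * g z) := by
  have := hg.mul_dec hf
  simpa [mul_comm] using this

lemma Bdd.mul (hf : Bdd s f) (hg : Bdd s g) : Bdd s (fun z => f z * g z) := by
  obtain ⟨C, hC⟩ := hf; obtain ⟨D, hD⟩ := hg
  refine ⟨max C 0 * max D 0, fun t ht x => ?_⟩
  rw [abs_mul]
  exact mul_le_mul ((hC t ht x).trans (le_max_left _ _))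
    ((hD t ht x).trans (le_max_left _ _)) (abs_nonneg _) (le_max_right _ _)

lemma Bdd.pow (hf : Bdd s f) (n : ℕ) : Bdd s (fun z => f z ^ n) := by
  induction n with
  | zero => exact ⟨1, fun t ht x => by simp⟩
  | succ m ih => simpa [pow_succ] using ih.mul hf

lemma Bdd.const_mul (hf : Bdd s f) (c : ℝ) : Bdd s (fun z => c * f z) := by
  obtain ⟨C, hC⟩ := hf
  refine ⟨|c| * max C 0, fun t ht x => ?_⟩
  rw [abs_mul]
  exact mul_le_mul_of_nonneg_left ((hC t ht x).trans (le_max_left _ _)) (abs_nonneg _)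

lemma Dec.const_mul (hf : Dec s f) (c : ℝ) : Dec s (fun z => c * f z) := by
  have hb : Bdd s (fun _ : ℝ × ℝ => c) := ⟨|c|, fun _ _ _ => le_rfl⟩
  exact hb.mul_dec hf

/-- integrability from a `C (1+x²)⁻¹` bound -/
lemma integrable_of_bound {G : ℝ → ℝ} (hG : Continuous G) (C : ℝ)
    (h : ∀ x, |G x| ≤ C * (1 + x ^ 2)⁻¹) : Integrable G := by
  refine (integrable_inv_one_add_sq.const_mul C).mono' hG.aestronglyMeasurable ?_
  exact Filter.Eventually.of_forall fun x => by simpa [Real.norm_eq_abs] using h x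

lemma tendsto_bound_atTop (C : ℝ) :
    Tendsto (fun x : ℝ => C * (1 + x ^ 2)⁻¹) atTop (𝓝 0) := by
  have h1 : Tendsto (fun x : ℝ => 1 + x ^ 2) atTop atTop :=
    tendsto_atTop_add_const_left _ _ (tendsto_pow_atTop two_ne_zero)
  simpa using (h1.inv_tendsto_atTop).const_mul C

lemma tendsto_bound_atBot (C : ℝ) :
    Tendsto (fun x : ℝ => C * (1 + x ^ 2)⁻¹) atBot (𝓝 0) := by
  have h0 : Tendsto (fun x : ℝ => x ^ 2) atBot atTop := by
    have := (tendsto_pow_atTop (α := ℝ) two_ne_zero).comp tendsto_neg_atBot_atTop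
    simpa [Function.comp_def, neg_sq] using this
  have h1 : Tendsto (fun x : ℝ => 1 + x ^ 2) atBot atTop :=
    tendsto_atTop_add_const_left _ _ h0
  simpa using (h1.inv_tendsto_atTop).const_mul C

lemma tendsto_zero_of_bound_atTop {G : ℝ → ℝ} (C : ℝ)
    (h : ∀ x, |G x| ≤ C * (1 + x ^ 2)⁻¹) : Tendsto G atTop (𝓝 0) :=
  squeeze_zero_norm (fun x => by simpa [Real.norm_eq_abs] using h x) (tendsto_bound_atTop C)

lemma tendsto_zero_of_bound_atBot {G : ℝ → ℝ} (C : ℝ)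
    (h : ∀ x, |G x| ≤ C * (1 + x ^ 2)⁻¹) : Tendsto G atBot (𝓝 0) :=
  squeeze_zero_norm (fun x => by simpa [Real.norm_eq_abs] using h x) (tendsto_bound_atBot C)

/-- the integral over ℝ of the derivative of a decaying function vanishes -/
lemma integral_deriv_zero {G G' : ℝ → ℝ} (hd : ∀ x, HasDerivAt G (G' x) x)
    (hi : Integrable G') (ht : Tendsto G atTop (𝓝 0)) (hb : Tendsto G atBot (𝓝 0)) :
    ∫ x, G' x = 0 := by
  have h1 : ∫ x in Iic (0:ℝ), G' x = G 0 - 0 :=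
    integral_Iic_of_hasDerivAt_of_tendsto' (fun x _ => hd x) hi.integrableOn hb
  have h2 : ∫ x in Ioi (0:ℝ), G' x = 0 - G 0 :=
    integral_Ioi_of_hasDerivAt_of_tendsto' (fun x _ => hd x) hi.integrableOn ht
  rw [← intervalIntegral.integral_Iic_add_Ioi hi.integrableOn hi.integrableOn, h1, h2]
  ring

end KdVAux

namespace KdVAux
open MeasureTheory Filter Set Topology

variable (u : ℝ → ℝ → ℝ) (k : ℕ)

def UU : ℝ × ℝ → ℝ := fun z => u z.1 z.2
def AA : ℝ × ℝ → ℝ := pdx (UU u)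
def BB : ℝ × ℝ → ℝ := pdx (AA u)
def CC : ℝ × ℝ → ℝ := pdx (BB u)
def DD : ℝ × ℝ → ℝ := pdx (CC u)
def VV : ℝ × ℝ → ℝ := pdt (UU u)
def WW : ℝ × ℝ → ℝ := fun z => UU u z ^ (k + 1)
def QQ : ℝ × ℝ → ℝ := fun z => BB u z + WW u k z
def gg : ℝ × ℝ → ℝ := fun z =>
  (1 / 2 : ℝ) * AA u z ^ 2 - (1 / ((k : ℝ) + 2)) * UU u z ^ (k + 2)
def FF : ℝ × ℝ → ℝ := fun z => AA u z * VV u z + (1 / 2 : ℝ) * QQ u k z ^ 2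
def EE : ℝ → ℝ := fun t => ∫ x, gg u k (x, t)

variable {u k}

lemma hA (hU : ContDiff ℝ (⊤ : ℕ∞) (UU u)) : ContDiff ℝ (⊤ : ℕ∞) (AA u) := contDiff_pdx hU
lemma hB (hU : ContDiff ℝ (⊤ : ℕ∞) (UU u)) : ContDiff ℝ (⊤ : ℕ∞) (BB u) := contDiff_pdx (hA hU)
lemma hC (hU : ContDiff ℝ (⊤ : ℕ∞) (UU u)) : ContDiff ℝ (⊤ : ℕ∞) (CC u) := contDiff_pdx (hB hU)
lemma hD (hU : ContDiff ℝ (⊤ : ℕ∞) (UU u)) : ContDiff ℝ (⊤ : ℕ∞) (DD u) := contDiff_pdx (hC hU)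
lemma hV (hU : ContDiff ℝ (⊤ : ℕ∞) (UU u)) : ContDiff ℝ (⊤ : ℕ∞) (VV u) := contDiff_pdt hU
lemma hW (hU : ContDiff ℝ (⊤ : ℕ∞) (UU u)) : ContDiff ℝ (⊤ : ℕ∞) (WW u k) := hU.pow _
lemma hQ (hU : ContDiff ℝ (⊤ : ℕ∞) (UU u)) : ContDiff ℝ (⊤ : ℕ∞) (QQ u k) := (hB hU).add (hW hU)
lemma hg (hU : ContDiff ℝ (⊤ : ℕ∞) (UU u)) : ContDiff ℝ (⊤ : ℕ∞) (gg u k) :=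
  (((hA hU).pow 2).const_smul ((1:ℝ)/2)).sub ((hU.pow (k+2)).const_smul (1/((k:ℝ)+2)))
lemma hF (hU : ContDiff ℝ (⊤ : ℕ∞) (UU u)) : ContDiff ℝ (⊤ : ℕ∞) (FF u k) :=
  ((hA hU).mul (hV hU)).add (((hQ hU).pow 2).const_smul ((1:ℝ)/2))

lemma iter3 : pdx^[3] (UU u) = CC u := by
  show pdx^[3] (UU u) = pdx (pdx (pdx (UU u)))
  rw [show (3:ℕ) = 2 + 1 from rfl, Function.iterate_succ_apply',
    show (2:ℕ) = 1 + 1 from rfl, Function.iterate_succ_apply', Function.iterate_one]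

end KdVAux

namespace KdVAux
open MeasureTheory Filter Set Topology

variable {u : ℝ → ℝ → ℝ} {k : ℕ}

lemma pdxW_eq (hU : ContDiff ℝ (⊤ : ℕ∞) (UU u)) (z : ℝ × ℝ) :
    pdx (WW u k) z = ((k:ℝ) + 1) * UU u z ^ k * AA u z := by
  obtain ⟨x, t⟩ := z
  apply pdx_eq (hW hU)
  have h := (hasDerivAt_slice_x hU x t).pow (k+1)
  simp at h
  exact h

lemma heq_pdx (hU : ContDiff ℝ (⊤ : ℕ∞) (UU u))
    (heq : ∀ x t : ℝ, deriv (fun τ => u x τ) t + iteratedDeriv 3 (fun y => u y t) x +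
      deriv (fun y => u y t ^ (k + 1)) x = 0) (z : ℝ × ℝ) :
    VV u z + CC u z + pdx (WW u k) z = 0 := by
  obtain ⟨x, t⟩ := z
  have h1 : deriv (fun τ => u x τ) t = VV u (x, t) := (hasDerivAt_slice_t hU x t).deriv
  have h2 : iteratedDeriv 3 (fun y => u y t) x = CC u (x, t) := by
    have h := iteratedDeriv_slice hU 3 x t
    rwa [iter3] at h
  have h3 : deriv (fun y => u y t ^ (k+1)) x = pdx (WW u k) (x, t) :=
    (hasDerivAt_slice_x (hW hU) x t).deriv
  have h := heq x t
  rw [h1, h2, h3] at h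
  exact h

lemma VV_eq (hU : ContDiff ℝ (⊤ : ℕ∞) (UU u))
    (heq : ∀ x t : ℝ, deriv (fun τ => u x τ) t + iteratedDeriv 3 (fun y => u y t) x +
      deriv (fun y => u y t ^ (k + 1)) x = 0) (z : ℝ × ℝ) :
    VV u z = -(CC u z + ((k:ℝ) + 1) * UU u z ^ k * AA u z) := by
  have h := heq_pdx hU heq z
  rw [pdxW_eq hU z] at h
  linarith

lemma pdxV_eq_pdtA (hU : ContDiff ℝ (⊤ : ℕ∞) (UU u)) : pdx (VV u) = pdt (AA u) := pdx_pdt hU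

lemma pdtA_eq (hU : ContDiff ℝ (⊤ : ℕ∞) (UU u))
    (heq : ∀ x t : ℝ, deriv (fun τ => u x τ) t + iteratedDeriv 3 (fun y => u y t) x +
      deriv (fun y => u y t ^ (k + 1)) x = 0) (z : ℝ × ℝ) :
    pdt (AA u) z = -(DD u z +
      ((k:ℝ) + 1) * ((k:ℝ) * UU u z ^ (k-1) * AA u z ^ 2 + UU u z ^ k * BB u z)) := by
  rw [← pdxV_eq_pdtA hU]
  obtain ⟨x, t⟩ := z
  apply pdx_eq (hV hU)
  have hVfun : (fun y => VV u (y, t)) =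
      fun y => -(CC u (y, t) + ((k:ℝ) + 1) * UU u (y, t) ^ k * AA u (y, t)) :=
    funext fun y => VV_eq hU heq (y, t)
  rw [hVfun]
  have h1 : HasDerivAt (fun y => CC u (y, t)) (DD u (x, t)) x := hasDerivAt_slice_x (hC hU) x t
  have h2 : HasDerivAt (fun y => UU u (y, t) ^ k)
      ((k:ℝ) * UU u (x, t) ^ (k-1) * AA u (x, t)) x := (hasDerivAt_slice_x hU x t).pow k
  have h3 : HasDerivAt (fun y => AA u (y, t)) (BB u (x, t)) x := hasDerivAt_slice_x (hA hU) x t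
  have h4 := h1.add ((h2.const_mul ((k:ℝ) + 1)).mul h3)
  have h5 := h4.neg
  refine h5.congr_deriv (Eq.symm ?_)
  ring

lemma key (hU : ContDiff ℝ (⊤ : ℕ∞) (UU u))
    (heq : ∀ x t : ℝ, deriv (fun τ => u x τ) t + iteratedDeriv 3 (fun y => u y t) x +
      deriv (fun y => u y t ^ (k + 1)) x = 0) (z : ℝ × ℝ) :
    pdt (gg u k) z = pdx (FF u k) z := by
  obtain ⟨x, t⟩ := z
  have hk2 : ((k:ℝ) + 2) ≠ 0 := by positivity
  have hL : pdt (gg u k) (x, t) =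
      AA u (x, t) * pdt (AA u) (x, t) - WW u k (x, t) * VV u (x, t) := by
    apply pdt_eq (hg hU)
    show HasDerivAt (fun τ => (1/2 : ℝ) * AA u (x, τ) ^ 2 -
      (1 / ((k:ℝ) + 2)) * UU u (x, τ) ^ (k+2)) _ t
    have h1 : HasDerivAt (fun τ => AA u (x, τ)) (pdt (AA u) (x, t)) t :=
      hasDerivAt_slice_t (hA hU) x t
    have h2 : HasDerivAt (fun τ => UU u (x, τ)) (VV u (x, t)) t := hasDerivAt_slice_t hU x t
    have h3 := ((h1.pow 2).const_mul ((1:ℝ)/2)).sub ((h2.pow (k+2)).const_mul (1/((k:ℝ)+2)))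
    refine h3.congr_deriv (Eq.symm ?_)
    show _ = 1/2 * (↑(2:ℕ) * AA u (x,t) ^ (2-1) * pdt (AA u) (x,t)) -
      1/((k:ℝ)+2) * (↑(k+2) * UU u (x,t) ^ (k+2-1) * VV u (x,t))
    have e1 : (k+2-1 : ℕ) = k+1 := rfl
    rw [e1]
    push_cast
    show _ = 1/2 * (2 * AA u (x,t) ^ 1 * pdt (AA u) (x,t)) -
      1/((k:ℝ)+2) * (((k:ℝ)+2) * UU u (x,t) ^ (k+1) * VV u (x,t))
    rw [pow_one]
    show AA u (x,t) * pdt (AA u) (x,t) - UU u (x,t) ^ (k+1) * VV u (x,t) = _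
    field_simp
  have hQx : pdx (QQ u k) (x, t) = - VV u (x, t) := by
    apply pdx_eq (hQ hU)
    have h : HasDerivAt (fun y => BB u (y, t) + WW u k (y, t))
        (pdx (BB u) (x, t) + pdx (WW u k) (x, t)) x :=
      (hasDerivAt_slice_x (hB hU) x t).add (hasDerivAt_slice_x (hW hU) x t)
    have hz := heq_pdx hU heq (x, t)
    have : CC u (x,t) + pdx (WW u k) (x,t) = - VV u (x,t) := by linarith
    rw [← this]
    exact h
  have hR : pdx (FF u k) (x, t) = BB u (x, t) * VV u (x, t) +
      AA u (x, t) * pdt (AA u) (x, t) + QQ u k (x, t) * pdx (QQ u k) (x, t) := by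
    apply pdx_eq (hF hU)
    show HasDerivAt (fun y => AA u (y, t) * VV u (y, t) +
      (1/2 : ℝ) * QQ u k (y, t) ^ 2) _ x
    have h1 : HasDerivAt (fun y => AA u (y, t)) (BB u (x, t)) x := hasDerivAt_slice_x (hA hU) x t
    have h2 : HasDerivAt (fun y => VV u (y, t)) (pdx (VV u) (x, t)) x :=
      hasDerivAt_slice_x (hV hU) x t
    have h3 : HasDerivAt (fun y => QQ u k (y, t)) (pdx (QQ u k) (x, t)) x :=
      hasDerivAt_slice_x (hQ hU) x t
    have h4 := (h1.mul h2).add ((h3.pow 2).const_mul ((1:ℝ)/2))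
    rw [pdxV_eq_pdtA hU] at h4
    refine h4.congr_deriv (Eq.symm ?_)
    show _ = (BB u (x,t) * VV u (x,t) + AA u (x,t) * pdt (AA u) (x,t)) +
      1/2 * (↑(2:ℕ) * QQ u k (x,t) ^ (2-1) * pdx (QQ u k) (x,t))
    push_cast
    rw [pow_one]
    ring
  rw [hL, hR, hQx]
  have hQdef : QQ u k (x, t) = BB u (x, t) + WW u k (x, t) := rfl
  rw [hQdef]
  ring

end KdVAux

namespace KdVAux
open MeasureTheory Filter Set Topology

variable {u : ℝ → ℝ → ℝ} {k : ℕ} {T : ℝ}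

lemma Dec.congr {s : Set ℝ} {f g : ℝ × ℝ → ℝ} (h : ∀ z, f z = g z) (hf : Dec s f) :
    Dec s g := by
  obtain ⟨C, hC⟩ := hf
  exact ⟨C, fun t ht x => by rw [← h (x, t)]; exact hC t ht x⟩

lemma Bdd.congr {s : Set ℝ} {f g : ℝ × ℝ → ℝ} (h : ∀ z, f z = g z) (hf : Bdd s f) :
    Bdd s g := by
  obtain ⟨C, hC⟩ := hf
  exact ⟨C, fun t ht x => by rw [← h (x, t)]; exact hC t ht x⟩

lemma iter1 : pdx^[1] (UU u) = AA u := by rw [Function.iterate_one]; rfl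
lemma iter2 : pdx^[2] (UU u) = BB u := by
  rw [show (2:ℕ) = 1+1 from rfl, Function.iterate_succ_apply', iter1]; rfl
lemma iter4 : pdx^[4] (UU u) = DD u := by
  rw [show (4:ℕ) = 3+1 from rfl, Function.iterate_succ_apply', iter3]; rfl

section Decay

variable (hU : ContDiff ℝ (⊤ : ℕ∞) (UU u))
  (hdecay : ∀ n m : ℕ, ∃ C : ℝ, ∀ x t : ℝ, t ∈ Set.Icc 0 T →
      |x| ^ n * |iteratedDeriv m (fun y => u y t) x| ≤ C)

include hU hdecay

lemma decayU (m : ℕ) : Dec (Icc 0 T) (pdx^[m] (UU u)) := by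
  obtain ⟨C0, h0⟩ := hdecay 0 m
  obtain ⟨C2, h2⟩ := hdecay 2 m
  refine ⟨C0 + C2, fun t ht x => ?_⟩
  have e : iteratedDeriv m (fun y => u y t) x = pdx^[m] (UU u) (x, t) :=
    iteratedDeriv_slice hU m x t
  have h0' := h0 x t ht
  have h2' := h2 x t ht
  rw [e, pow_zero, one_mul] at h0'
  rw [e] at h2'
  have hpos : (0:ℝ) < 1 + x ^ 2 := aux_pos x
  rw [show (C0 + C2) * (1 + x ^ 2)⁻¹ = (C0 + C2) / (1 + x ^ 2) by ring, le_div_iff₀ hpos]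
  have hsq : |x| ^ 2 = x ^ 2 := sq_abs x
  nlinarith [abs_nonneg (pdx^[m] (UU u) (x, t))]

lemma decU : Dec (Icc 0 T) (UU u) := decayU hU hdecay 0
lemma decA : Dec (Icc 0 T) (AA u) := by have := decayU hU hdecay 1; rwa [iter1] at this
lemma decB : Dec (Icc 0 T) (BB u) := by have := decayU hU hdecay 2; rwa [iter2] at this
lemma decC : Dec (Icc 0 T) (CC u) := by have := decayU hU hdecay 3; rwa [iter3] at this
lemma decD : Dec (Icc 0 T) (DD u) := by have := decayU hU hdecay 4; rwa [iter4] at this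

lemma decW : Dec (Icc 0 T) (WW u k) := by
  have h := ((decU hU hdecay).bdd.pow k).mul_dec (decU hU hdecay)
  exact Dec.congr (fun z => (pow_succ _ _).symm) h

lemma decQ : Dec (Icc 0 T) (QQ u k) := (decB hU hdecay).add (decW hU hdecay)

lemma decUpow (n : ℕ) (hn : 1 ≤ n) : Dec (Icc 0 T) (fun z => UU u z ^ n) := by
  have h := ((decU hU hdecay).bdd.pow (n-1)).mul_dec (decU hU hdecay)
  refine Dec.congr (fun z => ?_) h
  rw [← pow_succ, Nat.sub_add_cancel hn]

lemma decAsq : Dec (Icc 0 T) (fun z => AA u z ^ 2) := by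
  have h := (decA hU hdecay).bdd.mul_dec (decA hU hdecay)
  exact Dec.congr (fun z => (sq (AA u z)).symm) h

lemma decG : Dec (Icc 0 T) (gg u k) :=
  ((decAsq hU hdecay).const_mul (1/2)).sub
    (((decUpow hU hdecay (k+2) (by omega))).const_mul (1/((k:ℝ)+2)))

end Decay

end KdVAux

namespace KdVAux
open MeasureTheory Filter Set Topology

variable {u : ℝ → ℝ → ℝ} {k : ℕ} {T : ℝ}

lemma pdtg_eq (hU : ContDiff ℝ (⊤ : ℕ∞) (UU u)) (z : ℝ × ℝ) :
    pdt (gg u k) z = AA u z * pdt (AA u) z - WW u k z * VV u z := by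
  obtain ⟨x, t⟩ := z
  apply pdt_eq (hg hU)
  show HasDerivAt (fun τ => (1/2 : ℝ) * AA u (x, τ) ^ 2 -
    (1 / ((k:ℝ) + 2)) * UU u (x, τ) ^ (k+2)) _ t
  have hk2 : ((k:ℝ) + 2) ≠ 0 := by positivity
  have h1 : HasDerivAt (fun τ => AA u (x, τ)) (pdt (AA u) (x, t)) t :=
    hasDerivAt_slice_t (hA hU) x t
  have h2 : HasDerivAt (fun τ => UU u (x, τ)) (VV u (x, t)) t := hasDerivAt_slice_t hU x t
  have h3 := ((h1.pow 2).const_mul ((1:ℝ)/2)).sub ((h2.pow (k+2)).const_mul (1/((k:ℝ)+2)))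
  refine h3.congr_deriv (Eq.symm ?_)
  show _ = 1/2 * (↑(2:ℕ) * AA u (x,t) ^ (2-1) * pdt (AA u) (x,t)) -
    1/((k:ℝ)+2) * (↑(k+2) * UU u (x,t) ^ (k+2-1) * VV u (x,t))
  have e1 : (k+2-1 : ℕ) = k+1 := rfl
  rw [e1]
  push_cast
  show _ = 1/2 * (2 * AA u (x,t) ^ 1 * pdt (AA u) (x,t)) -
    1/((k:ℝ)+2) * (((k:ℝ)+2) * UU u (x,t) ^ (k+1) * VV u (x,t))
  rw [pow_one]
  show AA u (x,t) * pdt (AA u) (x,t) - UU u (x,t) ^ (k+1) * VV u (x,t) = _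
  field_simp

section Decay2

variable (hU : ContDiff ℝ (⊤ : ℕ∞) (UU u))
  (hdecay : ∀ n m : ℕ, ∃ C : ℝ, ∀ x t : ℝ, t ∈ Set.Icc 0 T →
      |x| ^ n * |iteratedDeriv m (fun y => u y t) x| ≤ C)
  (heq : ∀ x t : ℝ, deriv (fun τ => u x τ) t + iteratedDeriv 3 (fun y => u y t) x +
      deriv (fun y => u y t ^ (k + 1)) x = 0)

include hU hdecay heq

lemma decV : Dec (Icc 0 T) (VV u) := by
  have h2 : Dec (Icc 0 T) (fun z => ((k:ℝ)+1) * UU u z ^ k * AA u z) := by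
    have hb : Bdd (Icc 0 T) (fun z => ((k:ℝ)+1) * UU u z ^ k) :=
      ((decU hU hdecay).bdd.pow k).const_mul ((k:ℝ)+1)
    exact hb.mul_dec (decA hU hdecay)
  have h := ((decC hU hdecay).add h2).neg
  exact Dec.congr (fun z => (VV_eq hU heq z).symm) h

lemma decPdtA : Dec (Icc 0 T) (pdt (AA u)) := by
  have h1 : Dec (Icc 0 T) (fun z => (k:ℝ) * UU u z ^ (k-1) * AA u z ^ 2) := by
    have hb : Bdd (Icc 0 T) (fun z => (k:ℝ) * UU u z ^ (k-1)) :=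
      ((decU hU hdecay).bdd.pow (k-1)).const_mul (k:ℝ)
    exact hb.mul_dec (decAsq hU hdecay)
  have h2 : Dec (Icc 0 T) (fun z => UU u z ^ k * BB u z) :=
    ((decU hU hdecay).bdd.pow k).mul_dec (decB hU hdecay)
  have h := ((decD hU hdecay).add ((h1.add h2).const_mul ((k:ℝ)+1))).neg
  exact Dec.congr (fun z => (pdtA_eq hU heq z).symm) h

lemma decPdtG : Dec (Icc 0 T) (pdt (gg u k)) := by
  have h1 : Dec (Icc 0 T) (fun z => AA u z * pdt (AA u) z) :=
    (decA hU hdecay).bdd.mul_dec (decPdtA hU hdecay heq)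
  have h2 : Dec (Icc 0 T) (fun z => WW u k z * VV u z) :=
    (decW hU hdecay).bdd.mul_dec (decV hU hdecay heq)
  exact Dec.congr (fun z => (pdtg_eq hU z).symm) (h1.sub h2)

lemma decF : Dec (Icc 0 T) (FF u k) := by
  have h1 : Dec (Icc 0 T) (fun z => AA u z * VV u z) :=
    (decA hU hdecay).bdd.mul_dec (decV hU hdecay heq)
  have h2 : Dec (Icc 0 T) (fun z => QQ u k z ^ 2) := by
    have h := (decQ (k:=k) hU hdecay).bdd.mul_dec (decQ (k:=k) hU hdecay)
    exact Dec.congr (fun z => (sq (QQ u k z)).symm) h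
  exact h1.add (h2.const_mul (1/2))

lemma decPdxF : Dec (Icc 0 T) (pdx (FF u k)) :=
  Dec.congr (fun z => key hU heq z) (decPdtG hU hdecay heq)

end Decay2

/-- slice helpers -/
lemma Dec.integrable_slice {s : Set ℝ} {f : ℝ × ℝ → ℝ} (hf : Dec s f) (hc : Continuous f)
    {t : ℝ} (ht : t ∈ s) : Integrable (fun x => f (x, t)) := by
  obtain ⟨C, hC⟩ := hf
  exact integrable_of_bound (hc.comp (continuous_id.prodMk continuous_const)) C
    (fun x => hC t ht x)

lemma Dec.tendsto_slice_atTop {s : Set ℝ} {f : ℝ × ℝ → ℝ} (hf : Dec s f)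
    {t : ℝ} (ht : t ∈ s) : Tendsto (fun x => f (x, t)) atTop (𝓝 0) := by
  obtain ⟨C, hC⟩ := hf
  exact tendsto_zero_of_bound_atTop C (fun x => hC t ht x)

lemma Dec.tendsto_slice_atBot {s : Set ℝ} {f : ℝ × ℝ → ℝ} (hf : Dec s f)
    {t : ℝ} (ht : t ∈ s) : Tendsto (fun x => f (x, t)) atBot (𝓝 0) := by
  obtain ⟨C, hC⟩ := hf
  exact tendsto_zero_of_bound_atBot C (fun x => hC t ht x)

end KdVAux

namespace KdVAux
open MeasureTheory Filter Set Topology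

variable {u : ℝ → ℝ → ℝ} {k : ℕ} {T : ℝ}

section Main

variable (hU : ContDiff ℝ (⊤ : ℕ∞) (UU u))
  (hdecay : ∀ n m : ℕ, ∃ C : ℝ, ∀ x t : ℝ, t ∈ Set.Icc 0 T →
      |x| ^ n * |iteratedDeriv m (fun y => u y t) x| ≤ C)
  (heq : ∀ x t : ℝ, deriv (fun τ => u x τ) t + iteratedDeriv 3 (fun y => u y t) x +
      deriv (fun y => u y t ^ (k + 1)) x = 0)

include hU hdecay heq

lemma integral_pdxF_zero {t : ℝ} (ht : t ∈ Icc 0 T) : ∫ x, pdx (FF u k) (x, t) = 0 := by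
  apply integral_deriv_zero (G := fun x => FF u k (x, t))
  · exact fun x => hasDerivAt_slice_x (hF hU) x t
  · exact (decPdxF hU hdecay heq).integrable_slice (contDiff_pdx (hF hU)).continuous ht
  · exact (decF hU hdecay heq).tendsto_slice_atTop ht
  · exact (decF hU hdecay heq).tendsto_slice_atBot ht

lemma hasDerivAt_EE {t₀ : ℝ} (ht₀ : t₀ ∈ Ioo 0 T) : HasDerivAt (EE u k) 0 t₀ := by
  obtain ⟨C, hC⟩ := decPdtG hU hdecay heq
  have hεpos : 0 < min t₀ (T - t₀) := lt_min ht₀.1 (sub_pos.mpr ht₀.2)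
  have hball : Metric.ball t₀ (min t₀ (T - t₀)) ⊆ Icc 0 T := by
    intro t htb
    rw [Metric.mem_ball, Real.dist_eq] at htb
    have h1 := abs_lt.mp htb
    have h2 := min_le_left t₀ (T - t₀)
    have h3 := min_le_right t₀ (T - t₀)
    constructor <;> [linarith; linarith]
  have hIcc : t₀ ∈ Icc 0 T := ⟨le_of_lt ht₀.1, le_of_lt ht₀.2⟩
  have hmeas : ∀ (t : ℝ), AEStronglyMeasurable (fun x => gg u k (x, t)) volume :=
    fun t => ((hg hU).continuous.comp (continuous_id.prodMk continuous_const)).aestronglyMeasurable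
  have hmeas' : AEStronglyMeasurable (fun x => pdt (gg u k) (x, t₀)) volume :=
    ((contDiff_pdt (hg hU)).continuous.comp
      (continuous_id.prodMk continuous_const)).aestronglyMeasurable
  have h := hasDerivAt_integral_of_dominated_loc_of_deriv_le
    (F := fun t x => gg u k (x, t)) (F' := fun t x => pdt (gg u k) (x, t))
    (bound := fun x => C * (1 + x ^ 2)⁻¹) (Metric.ball_mem_nhds t₀ hεpos)
    (Eventually.of_forall hmeas)
    ((decG hU hdecay).integrable_slice (hg hU).continuous hIcc)
    hmeas'
    (Eventually.of_forall fun x => fun t htb => by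
      rw [Real.norm_eq_abs]; exact hC t (hball htb) x)
    (integrable_inv_one_add_sq.const_mul C)
    (Eventually.of_forall fun x => fun t _ => hasDerivAt_slice_t (hg hU) x t)
  have h2 := h.2
  have h3 : ∫ x, pdt (gg u k) (x, t₀) = 0 := by
    have hcong : ∫ x, pdt (gg u k) (x, t₀) = ∫ x, pdx (FF u k) (x, t₀) :=
      integral_congr_ae (Eventually.of_forall fun x => key hU heq (x, t₀))
    rw [hcong]
    exact integral_pdxF_zero hU hdecay heq hIcc
  rw [h3] at h2
  exact h2

lemma contOn_EE : ContinuousOn (EE u k) (Icc 0 T) := by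
  intro t₀ ht₀
  obtain ⟨C, hC⟩ := decG (k := k) hU hdecay
  apply continuousWithinAt_of_dominated (bound := fun x => C * (1 + x ^ 2)⁻¹)
  · exact Eventually.of_forall fun t =>
      ((hg hU).continuous.comp (continuous_id.prodMk continuous_const)).aestronglyMeasurable
  · filter_upwards [eventually_mem_nhdsWithin] with t ht
    exact Eventually.of_forall fun x => by rw [Real.norm_eq_abs]; exact hC t ht x
  · exact integrable_inv_one_add_sq.const_mul C
  · exact Eventually.of_forall fun x =>
      ((hg hU).continuous.comp (continuous_const.prodMk continuous_id)).continuousAt.continuousWithinAt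

lemma EE_const : ∀ t₁ ∈ Icc 0 T, ∀ t₂ ∈ Icc 0 T, EE u k t₁ = EE u k t₂ := by
  have hdiff : DifferentiableOn ℝ (EE u k) (interior (Icc 0 T)) := by
    rw [interior_Icc]
    exact fun t ht => (hasDerivAt_EE hU hdecay heq ht).differentiableAt.differentiableWithinAt
  have hderiv0 : ∀ t ∈ interior (Icc (0:ℝ) T), deriv (EE u k) t = 0 := by
    rw [interior_Icc]
    exact fun t ht => (hasDerivAt_EE hU hdecay heq ht).deriv
  have hmono : MonotoneOn (EE u k) (Icc 0 T) :=
    monotoneOn_of_deriv_nonneg (convex_Icc 0 T) (contOn_EE hU hdecay heq) hdiff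
      (fun t ht => le_of_eq (hderiv0 t ht).symm)
  have hanti : AntitoneOn (EE u k) (Icc 0 T) :=
    antitoneOn_of_deriv_nonpos (convex_Icc 0 T) (contOn_EE hU hdecay heq) hdiff
      (fun t ht => le_of_eq (hderiv0 t ht))
  intro t₁ h1 t₂ h2
  rcases le_total t₁ t₂ with h | h
  · exact le_antisymm (hmono h1 h2 h) (hanti h1 h2 h)
  · exact (le_antisymm (hmono h2 h1 h) (hanti h2 h1 h)).symm

end Main

lemma EE_eq (hU : ContDiff ℝ (⊤ : ℕ∞) (UU u))
    (hdecay : ∀ n m : ℕ, ∃ C : ℝ, ∀ x t : ℝ, t ∈ Set.Icc 0 T →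
      |x| ^ n * |iteratedDeriv m (fun y => u y t) x| ≤ C)
    {t : ℝ} (ht : t ∈ Icc 0 T) :
    EE u k t = (1/2 : ℝ) * (∫ x : ℝ, (deriv (fun y => u y t) x) ^ 2) -
      (1 / ((k:ℝ) + 2)) * ∫ x : ℝ, u x t ^ (k + 2) := by
  have e1 : (fun x : ℝ => (deriv (fun y => u y t) x) ^ 2) = fun x => AA u (x, t) ^ 2 :=
    funext fun x => by
      rw [show deriv (fun y => u y t) x = AA u (x, t) from (hasDerivAt_slice_x hU x t).deriv]
  have e2 : (fun x : ℝ => u x t ^ (k + 2)) = fun x => UU u (x, t) ^ (k + 2) := rfl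
  have int1 : Integrable (fun x => AA u (x, t) ^ 2) :=
    (decAsq hU hdecay).integrable_slice ((hA hU).continuous.pow 2) ht
  have int2 : Integrable (fun x => UU u (x, t) ^ (k + 2)) :=
    (decUpow hU hdecay (k + 2) (by omega)).integrable_slice (hU.continuous.pow (k + 2)) ht
  calc EE u k t
      = ∫ x, ((1/2 : ℝ) * AA u (x, t) ^ 2 - (1 / ((k:ℝ) + 2)) * UU u (x, t) ^ (k + 2)) := rfl
    _ = (∫ x, (1/2 : ℝ) * AA u (x, t) ^ 2) -
        ∫ x, (1 / ((k:ℝ) + 2)) * UU u (x, t) ^ (k + 2) :=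
        integral_sub (int1.const_mul _) (int2.const_mul _)
    _ = (1/2 : ℝ) * (∫ x, AA u (x, t) ^ 2) -
        (1 / ((k:ℝ) + 2)) * ∫ x, UU u (x, t) ^ (k + 2) := by
        rw [integral_const_mul, integral_const_mul]
    _ = _ := by rw [← e1, ← e2]

end KdVAux

open MeasureTheory

theorem stmt_16 (T : ℝ) (hT : 0 < T) (k : ℕ) (hk : 1 ≤ k) (u : ℝ → ℝ → ℝ)
    (hsmooth : ContDiff ℝ (⊤ : ℕ∞) (fun z : ℝ × ℝ => u z.1 z.2))
    (hdecay : ∀ n m : ℕ, ∃ C : ℝ, ∀ x t : ℝ, t ∈ Set.Icc 0 T →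
      |x| ^ n * |iteratedDeriv m (fun y => u y t) x| ≤ C)
    (heq : ∀ x t : ℝ,
      deriv (fun τ => u x τ) t + iteratedDeriv 3 (fun y => u y t) x +
        deriv (fun y => u y t ^ (k + 1)) x = 0) :
    ∀ t₁ ∈ Set.Icc (0:ℝ) T, ∀ t₂ ∈ Set.Icc (0:ℝ) T,
      ((1 / 2) * ∫ x : ℝ, (deriv (fun y => u y t₁) x) ^ 2) -
          (1 / (k + 2 : ℝ)) * ∫ x : ℝ, u x t₁ ^ (k + 2) =
        ((1 / 2) * ∫ x : ℝ, (deriv (fun y => u y t₂) x) ^ 2) -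
          (1 / (k + 2 : ℝ)) * ∫ x : ℝ, u x t₂ ^ (k + 2) := by
  intro t₁ ht₁ t₂ ht₂
  have hU : ContDiff ℝ (⊤ : ℕ∞) (KdVAux.UU u) := hsmooth
  have h1 := KdVAux.EE_eq (k := k) hU hdecay ht₁
  have h2 := KdVAux.EE_eq (k := k) hU hdecay ht₂
  have h3 := KdVAux.EE_const hU hdecay heq t₁ ht₁ t₂ ht₂
  rw [← h1, ← h2]
  exact h3
end KdVAux
end
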